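/- Let α be an irrational number not equivalent to (1+√5)/2, whose continued fraction expansion contains for infinitely many n the pattern a_{n−2} = a_{n−1} = 1, aₙ = 3, a_{n+1} = a_{n+2} = a_{n+3} = 1, a_{n+4} = 3. Then 𝔨(α) ≤ 4/((√21+1)/10 + (√21+4575)/1258) = 0.952692⁺; in particular 𝔨(α) < 164/(13√173). -/

import Mathlib

open Filter

/-- The tails `αₙ = [aₙ; aₙ₊₁, …]` of the continued fraction of `α`. -/
noncomputable def cfTail (α : ℝ) : ℕ → ℝ
  | 0 => α
  | n + 1 => (Int.fract (cfTail α n))⁻¹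

/-- The partial quotients `aₙ` of the continued fraction of `α`. -/
noncomputable def cfDigit (α : ℝ) (n : ℕ) : ℤ := ⌊cfTail α n⌋

/-- Value `[a; b, c, …]` of a finite continued fraction given by a list. -/
noncomputable def finCF : List ℤ → ℝ
  | [] => 0
  | a :: l => (a : ℝ) + (finCF l)⁻¹

/-- `α*ₙ = [0; aₙ, aₙ₋₁, …, a₁]`. -/
noncomputable def cfStar (α : ℝ) (n : ℕ) : ℝ :=
  (finCF (((List.range' 1 n).reverse).map (cfDigit α)))⁻¹

/-- Numerators `pₙ` of the convergents of `α`. -/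
noncomputable def cfNum (α : ℝ) : ℕ → ℤ
  | 0 => cfDigit α 0
  | 1 => cfDigit α 1 * cfDigit α 0 + 1
  | n + 2 => cfDigit α (n + 2) * cfNum α (n + 1) + cfNum α n

/-- Denominators `qₙ` of the convergents of `α`. -/
noncomputable def cfDen (α : ℝ) : ℕ → ℤ
  | 0 => 1
  | 1 => cfDigit α 1
  | n + 2 => cfDigit α (n + 2) * cfDen α (n + 1) + cfDen α n

/-- The irrationality measure function `ψ_α^[2]` for "second best" approximations. -/
noncomputable def psi2 (α : ℝ) (t : ℝ) : ℝ :=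
  sInf { x : ℝ | ∃ p q : ℤ, 1 ≤ q ∧ (q : ℝ) ≤ t ∧
    (∀ n : ℕ, (p, q) ≠ (cfNum α n, cfDen α n)) ∧ x = |(q : ℝ) * α - (p : ℝ)| }

/-- The Diophantine constant `𝔨(α) = liminf_{t → ∞} t · ψ_α^[2](t)`. -/
noncomputable def kConst (α : ℝ) : ℝ := liminf (fun t : ℝ => t * psi2 α t) atTop

/-- Two numbers are equivalent if the tails of their continued fraction expansions
coincide: `a_{n+k} = b_{m+k}` for all `k ≥ 1`, for some positive integers `m`, `n`. -/
def CFEquiv (α β : ℝ) : Prop :=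
  ∃ n m : ℕ, 0 < n ∧ 0 < m ∧ ∀ k : ℕ, 0 < k → cfDigit α (n + k) = cfDigit β (m + k)

/-- The spectrum `𝕃₂` of values of `𝔨`. -/
def L2 : Set ℝ := { l : ℝ | ∃ α : ℝ, Irrational α ∧ l = kConst α }

/-- `κ¹ₙ(α) = (1 + α*ₙ₋₁)(αₙ − 1)/(αₙ + α*ₙ₋₁)`. -/
noncomputable def kappa1 (α : ℝ) (n : ℕ) : ℝ :=
  (1 + cfStar α (n - 1)) * (cfTail α n - 1) / (cfTail α n + cfStar α (n - 1))

/-- `κ²ₙ(α) = (1 − α*ₙ)(αₙ₊₁ + 1)/(αₙ₊₁ + α*ₙ)`. -/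
noncomputable def kappa2 (α : ℝ) (n : ℕ) : ℝ :=
  (1 - cfStar α n) * (cfTail α (n + 1) + 1) / (cfTail α (n + 1) + cfStar α n)

/-- `κ⁴ₙ(α) = 4/(αₙ + α*ₙ₋₁)`. -/
noncomputable def kappa4 (α : ℝ) (n : ℕ) : ℝ :=
  4 / (cfTail α n + cfStar α (n - 1))


/-!
A non-convergent fraction `p/q` gives `t ψ_α^[2](t) ≤ t |qα − p|` at `t = q`. Since
`|qₙα − pₙ| = 1/(αₙ₊₁qₙ + qₙ₋₁)` and `α*ₙ = qₙ₋₁/qₙ`, the fraction `2pₙ/2qₙ` gives the value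
`κ⁴ₙ₊₁`, and the intermediate fraction `(pₙ₊₁ + pₙ)/(qₙ₊₁ + qₙ)`, which is not a convergent when
`aₙ₊₂ ≥ 2`, gives `κ¹ₙ₊₂`. So it suffices to find, near each occurrence of the pattern, an index
where one of these values is at most `4/W`, `W = (√21+1)/10 + (√21+4575)/1258`.

Write the pattern as `aₘ … aₘ₊₆ = 1,1,3,1,1,1,3`. If `α*ₘ₊₁ < (√21+1)/10`, then `α*ₘ₋₁` is small,
so `aₘ₋₁ + α*ₘ₋₂` is large and `κ⁴ₘ₋₁ < 18/19`. Otherwise, if `αₘ₊₆ ≥ 7117/2000`, then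
`αₘ₊₂ = [3;1,1,1,αₘ₊₆] ≥ (√21+4575)/1258` and `κ⁴ₘ₊₂ ≤ 4/W`. In the remaining case
`αₘ₊₇ > 2000/1117`, and according as `aₘ₊₇ ≥ 4`, `aₘ₊₇ ∈ {2,3}` or `aₘ₊₇ = 1` (which forces
`aₘ₊₈ = 1`), the value `κ⁴ₘ₊₇`, `κ¹ₘ₊₇` or `κ⁴ₘ₊₉` is at most `18/19 < 4/W`.
-/

section ContinuedFraction

variable {α : ℝ}

lemma cfTail_succ (n : ℕ) : cfTail α (n + 1) = (cfTail α n - cfDigit α n)⁻¹ := rfl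

lemma cfTail_eq (n : ℕ) : cfTail α n = cfDigit α n + (cfTail α (n + 1))⁻¹ := by
  rw [cfTail_succ, inv_inv]
  ring

lemma cfTail_eq_of_cfDigit {n : ℕ} {a : ℤ} (h : cfDigit α n = a) :
    cfTail α n = a + (cfTail α (n + 1))⁻¹ := by
  rw [cfTail_eq, h]

lemma irrational_cfTail (hα : Irrational α) : ∀ n, Irrational (cfTail α n)
  | 0 => hα
  | n + 1 => by
    rw [cfTail_succ]
    exact ((irrational_cfTail hα n).sub_intCast _).inv

lemma cfDigit_lt_cfTail (hα : Irrational α) (n : ℕ) : (cfDigit α n : ℝ) < cfTail α n :=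
  (Int.floor_le _).lt_of_ne ((irrational_cfTail hα n).ne_int _).symm

lemma cfTail_lt_cfDigit_add_one (n : ℕ) : cfTail α n < cfDigit α n + 1 :=
  Int.lt_floor_add_one _

lemma one_lt_cfTail_succ (hα : Irrational α) (n : ℕ) : 1 < cfTail α (n + 1) := by
  rw [cfTail_succ, one_lt_inv₀ (sub_pos.2 (cfDigit_lt_cfTail hα n))]
  linarith [cfTail_lt_cfDigit_add_one (α := α) n]

lemma cfTail_sub_cfDigit_mul (hα : Irrational α) (n : ℕ) :
    (cfTail α n - cfDigit α n) * cfTail α (n + 1) = 1 := by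
  rw [cfTail_succ]
  exact mul_inv_cancel₀ (sub_pos.2 (cfDigit_lt_cfTail hα n)).ne'

lemma cfTail_succ_pos (hα : Irrational α) (n : ℕ) : 0 < cfTail α (n + 1) :=
  zero_lt_one.trans (one_lt_cfTail_succ hα n)

lemma one_le_cfDigit_succ (hα : Irrational α) (n : ℕ) : 1 ≤ cfDigit α (n + 1) :=
  Int.le_floor.2 (by exact_mod_cast (one_lt_cfTail_succ hα n).le)

lemma cfDigit_succ_eq_one (hα : Irrational α) {n : ℕ} (h : cfTail α (n + 1) < 2) :
    cfDigit α (n + 1) = 1 :=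
  le_antisymm (Int.lt_add_one_iff.1 (Int.floor_lt.2 (by exact_mod_cast h)))
    (one_le_cfDigit_succ hα n)

lemma cfDen_succ_succ (n : ℕ) :
    cfDen α (n + 2) = cfDigit α (n + 2) * cfDen α (n + 1) + cfDen α n := rfl

lemma cfNum_succ_succ (n : ℕ) :
    cfNum α (n + 2) = cfDigit α (n + 2) * cfNum α (n + 1) + cfNum α n := rfl

lemma one_le_cfDen (hα : Irrational α) : ∀ n, 1 ≤ cfDen α n
  | 0 => le_rfl
  | 1 => one_le_cfDigit_succ hα 0
  | n + 2 => by
    have := one_le_cfDen hα n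
    have := one_le_cfDen hα (n + 1)
    have := one_le_cfDigit_succ hα (n + 1)
    rw [cfDen_succ_succ]
    nlinarith

lemma cfDen_add_le_cfDen (hα : Irrational α) (n : ℕ) :
    cfDen α (n + 1) + cfDen α n ≤ cfDen α (n + 2) := by
  have := one_le_cfDen hα (n + 1)
  have := one_le_cfDigit_succ hα (n + 1)
  rw [cfDen_succ_succ]
  nlinarith

lemma cfDen_mono (hα : Irrational α) : Monotone (cfDen α) := by
  refine monotone_nat_of_le_succ fun n => ?_
  cases n with
  | zero => exact one_le_cfDigit_succ hα 0
  | succ n => linarith [cfDen_add_le_cfDen hα n, one_le_cfDen hα n]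

lemma le_cfDen (hα : Irrational α) : ∀ n : ℕ, (n : ℤ) ≤ cfDen α n
  | 0 => zero_le_one.trans (one_le_cfDen hα 0)
  | 1 => by simpa using one_le_cfDen hα 1
  | n + 2 => by
    have := le_cfDen hα (n + 1)
    have := one_le_cfDen hα n
    have := cfDen_add_le_cfDen hα n
    push_cast at *
    linarith

lemma cfNum_mul_cfDen_sub (n : ℕ) :
    cfNum α (n + 1) * cfDen α n - cfNum α n * cfDen α (n + 1) = (-1) ^ n := by
  induction n with
  | zero => simp [cfNum, cfDen]; ring
  | succ n ih =>
    rw [cfNum_succ_succ, cfDen_succ_succ, pow_succ, ← ih]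
    ring

lemma kappa4_succ (n : ℕ) : kappa4 α (n + 1) = 4 / (cfTail α (n + 1) + cfStar α n) := rfl

lemma kappa1_succ (n : ℕ) :
    kappa1 α (n + 1) =
      (1 + cfStar α n) * (cfTail α (n + 1) - 1) / (cfTail α (n + 1) + cfStar α n) := rfl

lemma cfStar_zero : cfStar α 0 = 0 := by
  simp [cfStar, finCF]

lemma cfStar_succ (n : ℕ) : cfStar α (n + 1) = (cfDigit α (n + 1) + cfStar α n)⁻¹ := by
  rw [cfStar, List.range'_concat, List.reverse_append, List.map_append]
  simp [finCF, cfStar, add_comm 1 n]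

lemma cfStar_nonneg (hα : Irrational α) : ∀ n, 0 ≤ cfStar α n
  | 0 => cfStar_zero.ge
  | n + 1 => by
    rw [cfStar_succ]
    have := cfStar_nonneg hα n
    have : (1 : ℝ) ≤ cfDigit α (n + 1) := by exact_mod_cast one_le_cfDigit_succ hα n
    positivity

lemma cfStar_succ_pos (hα : Irrational α) (n : ℕ) : 0 < cfStar α (n + 1) := by
  rw [cfStar_succ]
  have := cfStar_nonneg hα n
  have : (1 : ℝ) ≤ cfDigit α (n + 1) := by exact_mod_cast one_le_cfDigit_succ hα n
  positivity

lemma cfStar_le_one (hα : Irrational α) : ∀ n, cfStar α n ≤ 1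
  | 0 => cfStar_zero.le.trans zero_le_one
  | n + 1 => by
    rw [cfStar_succ]
    have := cfStar_nonneg hα n
    have : (1 : ℝ) ≤ cfDigit α (n + 1) := by exact_mod_cast one_le_cfDigit_succ hα n
    exact inv_le_one_of_one_le₀ (by linarith)

lemma cfStar_succ_eq_div (hα : Irrational α) : ∀ n,
    cfStar α (n + 1) = (cfDen α n : ℝ) / cfDen α (n + 1)
  | 0 => by simp [cfStar_succ, cfStar_zero, cfDen]
  | n + 1 => by
    have h0 : (0 : ℝ) < cfDen α (n + 1) := by exact_mod_cast one_le_cfDen hα (n + 1)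
    rw [cfStar_succ, cfStar_succ_eq_div hα n, cfDen_succ_succ]
    push_cast
    field_simp

noncomputable def cfErr (α : ℝ) (n : ℕ) : ℝ := cfDen α n * α - cfNum α n

lemma cfErr_succ_succ (n : ℕ) :
    cfErr α (n + 2) = cfDigit α (n + 2) * cfErr α (n + 1) + cfErr α n := by
  simp only [cfErr, cfDen_succ_succ, cfNum_succ_succ]
  push_cast
  ring

lemma cfErr_eq_neg_mul (hα : Irrational α) : ∀ n,
    cfErr α n = -(cfTail α (n + 2) * cfErr α (n + 1))
  | 0 => by
    have h0 := cfTail_sub_cfDigit_mul hα 0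
    have h1 := cfTail_sub_cfDigit_mul hα 1
    rw [show cfTail α 0 = α from rfl] at h0
    simp only [cfErr, cfNum, cfDen]
    push_cast
    linear_combination cfTail α 2 * h0 - (α - cfDigit α 0) * h1
  | n + 1 => by
    have ih := cfErr_eq_neg_mul hα n
    have h := cfTail_eq (α := α) (n + 2)
    have := (cfTail_succ_pos hα (n + 2)).ne'
    rw [cfErr_succ_succ, ih, h, show n + 1 + 2 = n + 2 + 1 by ring]
    field_simp
    ring

lemma cfErr_succ_mul (hα : Irrational α) (n : ℕ) :
    cfErr α (n + 1) * (cfTail α (n + 2) * cfDen α (n + 1) + cfDen α n) = -(-1) ^ n := by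
  have hdet : (cfNum α (n + 1) * cfDen α n - cfNum α n * cfDen α (n + 1) : ℝ) = (-1) ^ n := by
    exact_mod_cast cfNum_mul_cfDen_sub n
  have h := cfErr_eq_neg_mul hα n
  simp only [cfErr] at *
  linear_combination (cfDen α (n + 1) : ℝ) * h - hdet

lemma abs_cfErr_succ (hα : Irrational α) (n : ℕ) :
    |cfErr α (n + 1)| = (cfTail α (n + 2) * cfDen α (n + 1) + cfDen α n)⁻¹ := by
  have h1 : 0 < cfTail α (n + 2) := cfTail_succ_pos hα (n + 1)
  have h2 : (0 : ℝ) < cfDen α n := by exact_mod_cast one_le_cfDen hα n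
  have h3 : (0 : ℝ) < cfDen α (n + 1) := by exact_mod_cast one_le_cfDen hα (n + 1)
  have hD : 0 < cfTail α (n + 2) * cfDen α (n + 1) + cfDen α n := by positivity
  have h := congrArg abs (cfErr_succ_mul hα n)
  rw [abs_mul, abs_of_pos hD, abs_neg, abs_pow, abs_neg, abs_one, one_pow] at h
  exact eq_inv_of_mul_eq_one_left h

lemma two_mul_ne_convergent (hα : Irrational α) (n k : ℕ) :
    (2 * cfNum α (n + 1), 2 * cfDen α (n + 1)) ≠ (cfNum α k, cfDen α k) := by
  intro h
  obtain ⟨hp, hq⟩ := Prod.mk.inj h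
  cases k with
  | zero =>
    have := one_le_cfDen hα (n + 1)
    simp only [cfDen] at hq
    omega
  | succ j =>
    have h2 : (2 : ℤ) ∣ (-1) ^ j :=
      ⟨cfNum α (n + 1) * cfDen α j - cfNum α j * cfDen α (n + 1), by
        rw [← cfNum_mul_cfDen_sub, ← hp, ← hq]; ring⟩
    have := isUnit_of_dvd_unit h2 (isUnit_neg_one.pow j)
    norm_num [Int.isUnit_iff] at this

lemma add_ne_convergent (hα : Irrational α) {n : ℕ} (hd : 2 ≤ cfDigit α (n + 2)) (k : ℕ) :
    (cfNum α (n + 1) + cfNum α n, cfDen α (n + 1) + cfDen α n) ≠ (cfNum α k, cfDen α k) := by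
  intro h
  have hq := (Prod.mk.inj h).2
  have h0 := one_le_cfDen hα n
  have h1 := one_le_cfDen hα (n + 1)
  have h2 : cfDen α (n + 1) + cfDen α n < cfDen α (n + 2) := by
    rw [cfDen_succ_succ]; nlinarith
  rcases le_or_gt k (n + 1) with hk | hk
  · have := cfDen_mono hα hk; omega
  · have := cfDen_mono hα (show n + 2 ≤ k from hk); omega

lemma psi2_nonneg (t : ℝ) : 0 ≤ psi2 α t :=
  Real.sInf_nonneg (by rintro x ⟨p, q, -, -, -, rfl⟩; exact abs_nonneg _)

lemma mul_psi2_le {p q : ℤ} (hq : 1 ≤ q) (hpq : ∀ n, (p, q) ≠ (cfNum α n, cfDen α n)) :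
    (q : ℝ) * psi2 α q ≤ q * |q * α - p| := by
  have : (0 : ℝ) ≤ q := by exact_mod_cast (zero_le_one.trans hq)
  gcongr
  exact csInf_le ⟨0, by rintro x ⟨p', q', -, -, -, rfl⟩; exact abs_nonneg _⟩
    ⟨p, q, hq, le_rfl, hpq, rfl⟩

lemma mul_psi2_le_kappa4 (hα : Irrational α) (n : ℕ) :
    (2 * cfDen α (n + 1) : ℝ) * psi2 α (2 * cfDen α (n + 1)) ≤ kappa4 α (n + 2) := by
  have h := mul_psi2_le (α := α) (by linarith [one_le_cfDen hα (n + 1)])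
    (two_mul_ne_convergent hα n)
  have h1 := cfTail_succ_pos hα (n + 1)
  have h2 : (0 : ℝ) < cfDen α n := by exact_mod_cast one_le_cfDen hα n
  have h3 : (0 : ℝ) < cfDen α (n + 1) := by exact_mod_cast one_le_cfDen hα (n + 1)
  have he : (2 * cfDen α (n + 1) : ℝ) * α - (2 * cfNum α (n + 1)) = 2 * cfErr α (n + 1) := by
    rw [cfErr]; ring
  push_cast at h
  rw [he, abs_mul, abs_two, abs_cfErr_succ hα] at h
  refine h.trans_eq ?_
  rw [kappa4_succ, cfStar_succ_eq_div hα]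
  field_simp
  ring

lemma mul_psi2_le_kappa1 (hα : Irrational α) {n : ℕ} (hd : 2 ≤ cfDigit α (n + 3)) :
    (cfDen α (n + 2) + cfDen α (n + 1) : ℝ) * psi2 α (cfDen α (n + 2) + cfDen α (n + 1))
      ≤ kappa1 α (n + 3) := by
  have h := mul_psi2_le (α := α) (by linarith [one_le_cfDen hα (n + 1), one_le_cfDen hα (n + 2)])
    (add_ne_convergent hα hd)
  have h1 := one_lt_cfTail_succ hα (n + 2)
  have h2 : (0 : ℝ) < cfDen α (n + 1) := by exact_mod_cast one_le_cfDen hα (n + 1)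
  have h3 : (0 : ℝ) < cfDen α (n + 2) := by exact_mod_cast one_le_cfDen hα (n + 2)
  have he : (cfDen α (n + 2) + cfDen α (n + 1) : ℝ) * α - (cfNum α (n + 2) + cfNum α (n + 1))
      = (1 - cfTail α (n + 3)) * cfErr α (n + 2) := by
    have h : cfErr α (n + 1) = -(cfTail α (n + 3) * cfErr α (n + 2)) := cfErr_eq_neg_mul hα (n + 1)
    simp only [cfErr] at h ⊢
    linear_combination h
  push_cast at h
  rw [he, abs_mul, abs_of_neg (by linarith), abs_cfErr_succ hα] at h
  refine h.trans_eq ?_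
  rw [kappa1_succ, cfStar_succ_eq_div hα]
  field_simp
  ring

lemma kConst_le_of_frequently {c : ℝ} (h : ∃ᶠ t in atTop, t * psi2 α t ≤ c) : kConst α ≤ c :=
  liminf_le_of_frequently_le h (isBoundedUnder_of_eventually_ge
    ((eventually_ge_atTop 0).mono fun t ht => mul_nonneg ht (psi2_nonneg t)))

def KappaLe (α c : ℝ) (k : ℕ) : Prop :=
  kappa4 α k ≤ c ∨ (2 ≤ cfDigit α k ∧ kappa1 α k ≤ c)

lemma KappaLe.mono {c c' : ℝ} {k : ℕ} (h : KappaLe α c k) (hc : c ≤ c') : KappaLe α c' k :=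
  h.imp (·.trans hc) fun h => ⟨h.1, h.2.trans hc⟩

lemma frequently_mul_psi2_le (hα : Irrational α) {c : ℝ} (h : ∃ᶠ k in atTop, KappaLe α c k) :
    ∃ᶠ t in atTop, t * psi2 α t ≤ c := by
  rw [frequently_atTop] at h ⊢
  intro T
  obtain ⟨k, hk, hc⟩ := h (⌈T⌉₊ + 3)
  obtain ⟨n, rfl⟩ : ∃ n, k = n + 3 := ⟨k - 3, by omega⟩
  have hT : T ≤ n := (Nat.le_ceil T).trans (by exact_mod_cast (by omega : ⌈T⌉₊ ≤ n))
  have hq : ∀ j : ℕ, (j : ℝ) ≤ cfDen α j := fun j => by exact_mod_cast le_cfDen hα j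
  have := hq (n + 1)
  have := hq (n + 2)
  have : (0 : ℝ) ≤ n := n.cast_nonneg
  push_cast at *
  rcases hc with h4 | ⟨hd, h1⟩
  · exact ⟨_, by linarith, (mul_psi2_le_kappa4 hα (n + 1)).trans h4⟩
  · exact ⟨_, by linarith, (mul_psi2_le_kappa1 hα hd).trans h1⟩

lemma kappa4_lt_of_cfStar_lt (hα : Irrational α) {n : ℕ} (d2 : cfDigit α (n + 2) = 1)
    (d3 : cfDigit α (n + 3) = 1) (d4 : cfDigit α (n + 4) = 3) (hs : cfStar α (n + 3) < 14 / 25) :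
    kappa4 α (n + 1) < 18 / 19 := by
  have hu : 0 < cfStar α (n + 1) := cfStar_succ_pos hα n
  have hz : 0 < cfTail α (n + 4) := cfTail_succ_pos hα (n + 3)
  have hz4 : cfTail α (n + 4) < 4 := by
    have := cfTail_lt_cfDigit_add_one (α := α) (n + 4)
    rw [d4] at this
    push_cast at this
    linarith
  have hs3 : cfStar α (n + 3) = (1 + cfStar α (n + 1)) / (2 + cfStar α (n + 1)) := by
    rw [cfStar_succ, d3, cfStar_succ, d2]
    push_cast
    field_simp
    ring
  have ht2 : (cfTail α (n + 2))⁻¹ = (cfTail α (n + 4) + 1) / (2 * cfTail α (n + 4) + 1) := by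
    rw [cfTail_eq_of_cfDigit d2, cfTail_eq_of_cfDigit d3]
    push_cast
    field_simp
    ring
  have hsum : cfTail α (n + 1) + cfStar α n = (cfStar α (n + 1))⁻¹ + (cfTail α (n + 2))⁻¹ := by
    rw [cfStar_succ, inv_inv, cfTail_eq (n + 1)]
    ring
  have hu3 : cfStar α (n + 1) < 3 / 11 := by
    rw [hs3, div_lt_iff₀ (by positivity)] at hs
    linarith
  have h1 : 11 / 3 < (cfStar α (n + 1))⁻¹ := by
    rw [lt_inv_comm₀ (by norm_num) hu]
    linarith
  have h2 : 5 / 9 < (cfTail α (n + 2))⁻¹ := by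
    rw [ht2, lt_div_iff₀ (by positivity)]
    linarith
  rw [kappa4_succ, hsum, div_lt_iff₀ (by positivity)]
  linarith

lemma le_cfTail_of_cfDigit_eq_3111 (hα : Irrational α) {n : ℕ} (d1 : cfDigit α (n + 1) = 3)
    (d2 : cfDigit α (n + 2) = 1) (d3 : cfDigit α (n + 3) = 1) (d4 : cfDigit α (n + 4) = 1)
    (h : 7117 / 2000 ≤ cfTail α (n + 5)) : 92287 / 25351 ≤ cfTail α (n + 1) := by
  have hx : 0 < cfTail α (n + 5) := cfTail_succ_pos hα (n + 4)
  have e : cfTail α (n + 1) = (11 * cfTail α (n + 5) + 7) / (3 * cfTail α (n + 5) + 2) := by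
    rw [cfTail_eq_of_cfDigit d1, cfTail_eq_of_cfDigit d2, cfTail_eq_of_cfDigit d3,
      cfTail_eq_of_cfDigit d4]
    push_cast
    field_simp
    ring
  rw [e, le_div_iff₀ (by positivity)]
  linarith

lemma cfStar_mem_of_cfDigit_eq_113 (hα : Irrational α) {n : ℕ} (d1 : cfDigit α (n + 1) = 1)
    (d2 : cfDigit α (n + 2) = 1) (d3 : cfDigit α (n + 3) = 3) :
    cfStar α (n + 3) ∈ Set.Icc (3 / 11) (2 / 7) := by
  have h0 := cfStar_nonneg hα n
  have h1 := cfStar_le_one hα n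
  have e : cfStar α (n + 3) = (2 + cfStar α n) / (7 + 4 * cfStar α n) := by
    rw [cfStar_succ, d3, cfStar_succ, d2, cfStar_succ, d1]
    push_cast
    field_simp
    ring
  rw [e, Set.mem_Icc, le_div_iff₀ (by positivity), div_le_iff₀ (by positivity)]
  constructor <;> linarith

lemma kappa4_le_of_four_le_cfDigit (hα : Irrational α) {n : ℕ} (hd : 4 ≤ cfDigit α (n + 1))
    (hs : 3 / 11 ≤ cfStar α n) : kappa4 α (n + 1) ≤ 44 / 47 := by
  have : (4 : ℝ) ≤ cfTail α (n + 1) :=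
    le_trans (by exact_mod_cast hd) (cfDigit_lt_cfTail hα (n + 1)).le
  rw [kappa4_succ, div_le_iff₀ (by linarith)]
  linarith

lemma kappa1_le_of_cfDigit_le_three (hα : Irrational α) {n : ℕ} (hd : cfDigit α (n + 1) ≤ 3)
    (hs : cfStar α n ≤ 2 / 7) : kappa1 α (n + 1) ≤ 9 / 10 := by
  have h1 := one_lt_cfTail_succ hα n
  have h4 : cfTail α (n + 1) < 4 := by
    have := cfTail_lt_cfDigit_add_one (α := α) (n + 1)
    have : (cfDigit α (n + 1) : ℝ) ≤ 3 := by exact_mod_cast hd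
    linarith
  have h0 := cfStar_nonneg hα n
  rw [kappa1_succ, div_le_iff₀ (by linarith)]
  nlinarith

lemma kappa4_le_of_cfDigit_eq_31 (hα : Irrational α) {n : ℕ} (d3 : cfDigit α (n + 3) = 3)
    (d4 : cfDigit α (n + 4) = 1) (ht : cfTail α (n + 3) < 7117 / 2000)
    (hs : 3 / 11 ≤ cfStar α (n + 3)) : kappa4 α (n + 6) ≤ 12 / 13 := by
  have hw : 0 < cfTail α (n + 5) := cfTail_succ_pos hα (n + 4)
  have e5 : cfTail α (n + 3) = (4 * cfTail α (n + 5) + 3) / (cfTail α (n + 5) + 1) := by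
    rw [cfTail_eq_of_cfDigit d3, cfTail_eq_of_cfDigit d4]
    push_cast
    field_simp
    ring
  have d5 : cfDigit α (n + 5) = 1 := by
    refine cfDigit_succ_eq_one hα ?_
    rw [e5, div_lt_iff₀ (by positivity)] at ht
    linarith
  have hy : 0 < cfTail α (n + 6) := cfTail_succ_pos hα (n + 5)
  have e6 : cfTail α (n + 3) = (7 * cfTail α (n + 6) + 4) / (2 * cfTail α (n + 6) + 1) := by
    rw [e5, cfTail_eq_of_cfDigit d5]
    push_cast
    field_simp
    ring
  have e : cfStar α (n + 5) = (1 + cfStar α (n + 3)) / (2 + cfStar α (n + 3)) := by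
    have := cfStar_nonneg hα (n + 3)
    rw [cfStar_succ, d5, cfStar_succ, d4]
    push_cast
    field_simp
    ring
  have hs5 : 14 / 25 ≤ cfStar α (n + 5) := by
    have := cfStar_nonneg hα (n + 3)
    rw [e, le_div_iff₀ (by positivity)]
    linarith
  rw [e6, div_lt_iff₀ (by positivity)] at ht
  rw [kappa4_succ, div_le_iff₀ (by linarith)]
  linarith

lemma exists_kappaLe_of_cfDigit_eq_113 (hα : Irrational α) {n : ℕ}
    (d1 : cfDigit α (n + 1) = 1) (d2 : cfDigit α (n + 2) = 1) (d3 : cfDigit α (n + 3) = 3)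
    (ht : cfTail α (n + 3) < 7117 / 2000) :
    ∃ k ≥ n + 4, KappaLe α (18 / 19) k := by
  obtain ⟨hs1, hs2⟩ := cfStar_mem_of_cfDigit_eq_113 hα d1 d2 d3
  rcases le_or_gt 4 (cfDigit α (n + 4)) with h4 | h4
  · exact ⟨n + 4, le_rfl, Or.inl ((kappa4_le_of_four_le_cfDigit hα h4 hs1).trans (by norm_num))⟩
  rcases (one_le_cfDigit_succ hα (n + 3) : 1 ≤ cfDigit α (n + 4)).eq_or_lt with h1 | h2
  · exact ⟨n + 6, by omega, Or.inl ((kappa4_le_of_cfDigit_eq_31 hα d3 h1.symm ht hs1).trans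
      (by norm_num))⟩
  · have h3 : cfDigit α (n + 4) ≤ 3 := Int.le_of_lt_add_one h4
    exact ⟨n + 4, le_rfl,
      Or.inr ⟨h2, (kappa1_le_of_cfDigit_le_three hα h3 hs2).trans (by norm_num)⟩⟩

end ContinuedFraction

noncomputable def patternDenom : ℝ := (√21 + 1) / 10 + (√21 + 4575) / 1258

lemma sqrt21_lt : √21 < 4583 / 1000 := by
  rw [Real.sqrt_lt' (by norm_num)]; norm_num

lemma lt_sqrt21 : 4582 / 1000 < √21 := by
  rw [Real.lt_sqrt (by norm_num)]; norm_num

lemma patternDenom_pos : 0 < patternDenom := by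
  unfold patternDenom; positivity

lemma le_four_div_patternDenom : 18 / 19 ≤ 4 / patternDenom := by
  rw [le_div_iff₀ patternDenom_pos, patternDenom]
  linarith [sqrt21_lt]

lemma four_div_patternDenom_lt : 4 / patternDenom < 164 / (13 * √173) := by
  have h173 : √173 < 13154 / 1000 := by rw [Real.sqrt_lt' (by norm_num)]; norm_num
  have : 0 < √173 := by positivity
  rw [div_lt_div_iff₀ patternDenom_pos (by positivity), patternDenom]
  linarith [lt_sqrt21]

def HasPattern (α : ℝ) (n : ℕ) : Prop :=
  cfDigit α n = 1 ∧ cfDigit α (n + 1) = 1 ∧ cfDigit α (n + 2) = 3 ∧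
    cfDigit α (n + 3) = 1 ∧ cfDigit α (n + 4) = 1 ∧ cfDigit α (n + 5) = 1 ∧
    cfDigit α (n + 6) = 3

lemma exists_kappaLe_of_hasPattern {α : ℝ} (hα : Irrational α) {n : ℕ}
    (hp : HasPattern α (n + 2)) : ∃ k ≥ n, KappaLe α (4 / patternDenom) k := by
  obtain ⟨d2, d3, d4, d5, d6, d7, d8⟩ := hp
  by_cases hs : cfStar α (n + 3) < (√21 + 1) / 10
  · have hs' : cfStar α (n + 3) < 14 / 25 := hs.trans (by linarith [sqrt21_lt])
    exact ⟨n + 1, by omega, Or.inl ((kappa4_lt_of_cfStar_lt hα d2 d3 d4 hs').le.trans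
      le_four_div_patternDenom)⟩
  by_cases ht : 7117 / 2000 ≤ cfTail α (n + 8)
  · have h4 : 92287 / 25351 ≤ cfTail α (n + 4) :=
      le_cfTail_of_cfDigit_eq_3111 hα (n := n + 3) d4 d5 d6 d7 ht
    refine ⟨n + 4, by omega, Or.inl (div_le_div_of_nonneg_left (by norm_num) patternDenom_pos ?_)⟩
    show patternDenom ≤ cfTail α (n + 4) + cfStar α (n + 3)
    unfold patternDenom
    linarith [sqrt21_lt, not_lt.1 hs]
  · obtain ⟨k, hk, h⟩ := exists_kappaLe_of_cfDigit_eq_113 hα (n := n + 5) d6 d7 d8 (not_le.1 ht)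
    exact ⟨k, by omega, h.mono le_four_div_patternDenom⟩

lemma frequently_kappaLe_of_hasPattern {α : ℝ} (hα : Irrational α)
    (h : ∃ᶠ n in atTop, HasPattern α n) :
    ∃ᶠ k in atTop, KappaLe α (4 / patternDenom) k := by
  rw [frequently_atTop] at h ⊢
  intro N
  obtain ⟨m, hm, hp⟩ := h (N + 2)
  obtain ⟨n, rfl⟩ : ∃ n, m = n + 2 := ⟨m - 2, by omega⟩
  obtain ⟨k, hk, hk'⟩ := exists_kappaLe_of_hasPattern hα hp
  exact ⟨k, by omega, hk'⟩

theorem stmt_18_general (α : ℝ) (hα : Irrational α)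
    (hpat : ∃ᶠ n in atTop,
      cfDigit α n = 1 ∧ cfDigit α (n + 1) = 1 ∧ cfDigit α (n + 2) = 3 ∧
      cfDigit α (n + 3) = 1 ∧ cfDigit α (n + 4) = 1 ∧ cfDigit α (n + 5) = 1 ∧
      cfDigit α (n + 6) = 3) :
    kConst α ≤ 4 / ((Real.sqrt 21 + 1) / 10 + (Real.sqrt 21 + 4575) / 1258) ∧
    kConst α < 164 / (13 * Real.sqrt 173) := by
  have hk : kConst α ≤ 4 / patternDenom :=
    kConst_le_of_frequently (frequently_mul_psi2_le hα (frequently_kappaLe_of_hasPattern hα hpat))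
  exact ⟨hk, hk.trans_lt four_div_patternDenom_lt⟩

/-- If `α` is irrational, not equivalent to `(1+√5)/2`, and contains the pattern
`1, 1, 3, 1, 1, 1, 3` for infinitely many positions, then
`𝔨(α) ≤ 4/((√21+1)/10 + (√21+4575)/1258)`; in particular `𝔨(α) < 164/(13√173)`. -/
theorem stmt_18 (α : ℝ) (hα : Irrational α)
    (h5 : ¬ CFEquiv α ((1 + Real.sqrt 5) / 2))
    (hpat : ∃ᶠ n in atTop,
      cfDigit α n = 1 ∧ cfDigit α (n + 1) = 1 ∧ cfDigit α (n + 2) = 3 ∧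
      cfDigit α (n + 3) = 1 ∧ cfDigit α (n + 4) = 1 ∧ cfDigit α (n + 5) = 1 ∧
      cfDigit α (n + 6) = 3) :
    kConst α ≤ 4 / ((Real.sqrt 21 + 1) / 10 + (Real.sqrt 21 + 4575) / 1258) ∧
    kConst α < 164 / (13 * Real.sqrt 173) :=
  stmt_18_general α hα hpat
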